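/- arXiv:1603.03030 — 3 statements merged into one kernel-verified Lean document; each statement's English description precedes it below -/
import Mathlib

section
/- Let D = {g_j}_{j∈J} be a finite frame in C^N with frame bounds A ≤ B (i.e., A‖f‖_2² ≤ Σ_j |⟨f, g_j⟩|² ≤ B‖f‖_2² for all f), and let A_D f = (⟨f, g_j⟩)_{j∈J} be the analysis operator. Then for any f in C^N and any p ≥ 2, ‖A_D f‖_p ≤ B^{1/p} · (max_j ‖g_j‖_2)^{1 - 2/p} · ‖f‖_2. -/
open Finset

noncomputable def lpnorm {ι : Type*} [Fintype ι] (p : ℝ) (f : ι → ℂ) : ℝ :=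
  (∑ i, ‖f i‖ ^ p) ^ (1 / p)

noncomputable def ip {ι : Type*} [Fintype ι] (x y : ι → ℂ) : ℂ :=
  ∑ i, x i * (starRingEnd ℂ) (y i)

lemma lpnorm_nonneg {ι : Type*} [Fintype ι] (p : ℝ) (f : ι → ℂ) : 0 ≤ lpnorm p f :=
  Real.rpow_nonneg (Finset.sum_nonneg fun _ _ => Real.rpow_nonneg (norm_nonneg _) p) _

lemma lpnorm_two_sq {ι : Type*} [Fintype ι] (f : ι → ℂ) :
    (lpnorm 2 f) ^ 2 = ∑ i, ‖f i‖ ^ 2 := by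
  have hs : ∀ i : ι, ‖f i‖ ^ (2:ℝ) = ‖f i‖ ^ (2:ℕ) := by
    intro i
    rw [show ((2:ℝ)) = ((2:ℕ):ℝ) by norm_num, Real.rpow_natCast]
  have h0 : 0 ≤ ∑ i, ‖f i‖ ^ (2:ℕ) :=
    Finset.sum_nonneg fun i _ => pow_nonneg (norm_nonneg _) _
  unfold lpnorm
  simp only [hs]
  rw [← Real.rpow_natCast (_ ^ (1/(2:ℝ))) 2, ← Real.rpow_mul h0]
  norm_num

lemma abs_ip_le {ι : Type*} [Fintype ι] (x y : ι → ℂ) :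
    ‖ip x y‖ ≤ lpnorm 2 x * lpnorm 2 y := by
  have h1 : ‖ip x y‖ ≤ ∑ i, ‖x i‖ * ‖y i‖ := by
    refine (norm_sum_le _ _).trans_eq ?_
    simp [map_mul]
  refine h1.trans ?_
  have h2 := Finset.sum_mul_sq_le_sq_mul_sq Finset.univ
    (fun i => ‖x i‖) (fun i => ‖y i‖)
  rw [← lpnorm_two_sq, ← lpnorm_two_sq, ← mul_pow] at h2
  have hS : 0 ≤ ∑ i, ‖x i‖ * ‖y i‖ :=
    Finset.sum_nonneg fun i _ => mul_nonneg (norm_nonneg _) (norm_nonneg _)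
  have := Real.sqrt_le_sqrt h2
  rwa [Real.sqrt_sq hS, Real.sqrt_sq (mul_nonneg (lpnorm_nonneg _ _) (lpnorm_nonneg _ _))] at this

/-- Lieb-type uncertainty principle for frames, upper bound, p ≥ 2. -/
theorem stmt8 {N : ℕ} {J : Type*} [Fintype J] [Nonempty J]
    (g : J → Fin N → ℂ) (A B : ℝ) (hA : 0 < A) (hAB : A ≤ B)
    (hframe : ∀ f : Fin N → ℂ,
      A * (lpnorm 2 f) ^ 2 ≤ ∑ j, ‖ip f (g j)‖ ^ 2 ∧
        ∑ j, ‖ip f (g j)‖ ^ 2 ≤ B * (lpnorm 2 f) ^ 2)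
    (f : Fin N → ℂ) (p : ℝ) (hp : 2 ≤ p) :
    lpnorm p (fun j => ip f (g j)) ≤
      B ^ (1 / p) * (⨆ j, lpnorm 2 (g j)) ^ (1 - 2 / p) * lpnorm 2 f := by
  have hp0 : (0:ℝ) < p := lt_of_lt_of_le (by norm_num) hp
  set L := lpnorm 2 f with hL
  set M := ⨆ j, lpnorm 2 (g j) with hM
  have hLnn : 0 ≤ L := lpnorm_nonneg _ _
  have hbdd : BddAbove (Set.range fun j => lpnorm 2 (g j)) :=
    (Set.finite_range _).bddAbove
  have hMj : ∀ j, lpnorm 2 (g j) ≤ M := fun j => le_ciSup hbdd j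
  have hMnn : 0 ≤ M := le_trans (lpnorm_nonneg 2 (g (Classical.arbitrary J))) (hMj _)
  have hBnn : 0 ≤ B := le_trans hA.le hAB
  -- pointwise bound
  have key : ∀ j, ‖ip f (g j)‖ ^ p ≤
      (L * M) ^ (p - 2) * ‖ip f (g j)‖ ^ (2:ℕ) := by
    intro j
    have habs : 0 ≤ ‖ip f (g j)‖ := norm_nonneg _
    have hsplit : ‖ip f (g j)‖ ^ p =
        ‖ip f (g j)‖ ^ (p - 2) * ‖ip f (g j)‖ ^ (2:ℝ) := by
      rw [← Real.rpow_add' habs (by linarith)]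
      norm_num
    rw [hsplit, show ‖ip f (g j)‖ ^ (2:ℝ)
        = ‖ip f (g j)‖ ^ (2:ℕ) by
      rw [show ((2:ℝ)) = ((2:ℕ):ℝ) by norm_num, Real.rpow_natCast]]
    have hb : ‖ip f (g j)‖ ≤ L * M :=
      (abs_ip_le f (g j)).trans (mul_le_mul_of_nonneg_left (hMj j) hLnn)
    exact mul_le_mul_of_nonneg_right
      (Real.rpow_le_rpow habs hb (by linarith)) (pow_nonneg habs 2)
  have hsum : ∑ j, ‖ip f (g j)‖ ^ p ≤ (L * M) ^ (p - 2) * (B * L ^ 2) := by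
    calc ∑ j, ‖ip f (g j)‖ ^ p
        ≤ ∑ j, (L * M) ^ (p - 2) * ‖ip f (g j)‖ ^ (2:ℕ) :=
          Finset.sum_le_sum fun j _ => key j
      _ = (L * M) ^ (p - 2) * ∑ j, ‖ip f (g j)‖ ^ (2:ℕ) := by
          rw [Finset.mul_sum]
      _ ≤ (L * M) ^ (p - 2) * (B * L ^ 2) :=
          mul_le_mul_of_nonneg_left (hframe f).2
            (Real.rpow_nonneg (mul_nonneg hLnn hMnn) _)
  have hlhs : lpnorm p (fun j => ip f (g j)) ≤
      ((L * M) ^ (p - 2) * (B * L ^ 2)) ^ (1 / p) := by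
    unfold lpnorm
    exact Real.rpow_le_rpow (Finset.sum_nonneg fun j _ =>
      Real.rpow_nonneg (norm_nonneg _) _) hsum (by positivity)
  refine hlhs.trans_eq ?_
  have h2 : L ^ (2:ℕ) = L ^ ((2:ℝ)) := by
    rw [show ((2:ℝ)) = ((2:ℕ):ℝ) by norm_num, Real.rpow_natCast]
  have hLM : 0 ≤ L * M := mul_nonneg hLnn hMnn
  rw [h2, Real.mul_rpow (Real.rpow_nonneg hLM _) (by positivity),
      Real.mul_rpow hBnn (Real.rpow_nonneg hLnn _),
      ← Real.rpow_mul hLM, ← Real.rpow_mul hLnn,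
      Real.mul_rpow hLnn hMnn]
  have e1 : (p - 2) * (1 / p) = 1 - 2 / p := by field_simp
  have hsum1 : (p - 2) * (1 / p) + 2 * (1 / p) = 1 := by field_simp; ring
  have e3 : L ^ ((p - 2) * (1 / p)) * L ^ ((2:ℝ) * (1 / p)) = L := by
    rw [← Real.rpow_add' hLnn (by rw [hsum1]; norm_num), hsum1, Real.rpow_one]
  have e4 : L ^ ((p - 2) * (1 / p)) * M ^ ((p - 2) * (1 / p)) *
      (B ^ (1 / p) * L ^ ((2:ℝ) * (1 / p))) =
      B ^ (1 / p) * M ^ ((p - 2) * (1 / p)) *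
      (L ^ ((p - 2) * (1 / p)) * L ^ ((2:ℝ) * (1 / p))) := by ring
  rw [e4, e3, e1]
end

section
/- Let L be the Laplacian of a connected graph on N vertices with orthonormal eigenvector basis {u_l} and eigenvalues {λ_l}. Define the localization operator T_i g(n) = √N Σ_{l=0}^{N-1} ĝ(λ_l) conj(u_l(i)) u_l(n) for a kernel ĝ : {λ_0,...,λ_{N-1}} → C. Then for any kernel g, |ĝ(0)| ≤ ‖T_i g‖_2 ≤ √N · ν_i · ‖ĝ‖_2 ≤ √N · μ_G · ‖ĝ‖_2, where ν_i = max_l |u_l(i)| and μ_G = max_{i,l} |u_l(i)|. -/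
open Finset

/-- Graph localization operator `T_i g(n) = √N ∑_l ĝ(λ_l) conj(u_l(i)) u_l(n)`. -/
noncomputable def locOp {N : ℕ} (u : Fin N → Fin N → ℂ) (lam : Fin N → ℝ)
    (g : ℝ → ℂ) (i : Fin N) : Fin N → ℂ :=
  fun n => (Real.sqrt N : ℂ) * ∑ l, g (lam l) * (starRingEnd ℂ) (u l i) * u l n

lemma parseval {N : ℕ} (u : Fin N → Fin N → ℂ)
    (hortho : ∀ l m, ip (u l) (u m) = if l = m then 1 else 0)
    (c : Fin N → ℂ) :
    ∑ n, (∑ l, c l * u l n) * (starRingEnd ℂ) (∑ l, c l * u l n)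
      = ∑ l, c l * (starRingEnd ℂ) (c l) := by
  have h : ∀ n : Fin N, (∑ l, c l * u l n) * (starRingEnd ℂ) (∑ m, c m * u m n)
      = ∑ l, ∑ m, (c l * (starRingEnd ℂ) (c m)) * (u l n * (starRingEnd ℂ) (u m n)) := by
    intro n
    rw [map_sum, Finset.sum_mul]
    refine Finset.sum_congr rfl fun l _ => ?_
    rw [Finset.mul_sum]
    refine Finset.sum_congr rfl fun m _ => ?_
    simp only [map_mul]; ring
  simp only [h]
  rw [Finset.sum_comm]
  refine Finset.sum_congr rfl fun l _ => ?_
  rw [Finset.sum_comm]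
  have : ∀ m : Fin N, ∑ n, (c l * (starRingEnd ℂ) (c m)) * (u l n * (starRingEnd ℂ) (u m n))
      = (c l * (starRingEnd ℂ) (c m)) * ip (u l) (u m) := by
    intro m; rw [ip, Finset.mul_sum]
  simp only [this, hortho]
  simp [Finset.sum_ite_eq']

lemma lpnorm_locOp {N : ℕ} (u : Fin N → Fin N → ℂ)
    (hortho : ∀ l m, ip (u l) (u m) = if l = m then 1 else 0)
    (lam : Fin N → ℝ) (g : ℝ → ℂ) (i : Fin N) :
    lpnorm 2 (locOp u lam g i)
      = Real.sqrt (N * ∑ l, ‖g (lam l)‖ ^ 2 * ‖u l i‖ ^ 2) := by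
  set c : Fin N → ℂ := fun l => g (lam l) * (starRingEnd ℂ) (u l i) with hc
  have hsum : (∑ n, ‖locOp u lam g i n‖ ^ 2)
      = N * ∑ l, ‖g (lam l)‖ ^ 2 * ‖u l i‖ ^ 2 := by
    have h1 : ∀ z : ℂ, ‖z‖ ^ 2 = (z * (starRingEnd ℂ) z).re := by
      intro z; rw [Complex.mul_conj, Complex.ofReal_re, Complex.sq_norm]
    have h2 : ∑ n, locOp u lam g i n * (starRingEnd ℂ) (locOp u lam g i n)
        = (N : ℂ) * ∑ l, c l * (starRingEnd ℂ) (c l) := by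
      have h3 : ∀ n, locOp u lam g i n * (starRingEnd ℂ) (locOp u lam g i n)
          = (N : ℂ) * ((∑ l, c l * u l n) * (starRingEnd ℂ) (∑ l, c l * u l n)) := by
        intro n
        simp only [locOp, map_mul, Complex.conj_ofReal, hc]
        have : ((Real.sqrt N : ℂ)) * (Real.sqrt N : ℂ) = (N : ℂ) := by
          rw [← Complex.ofReal_mul, Real.mul_self_sqrt (Nat.cast_nonneg N)]
          norm_cast
        rw [show ∀ a b : ℂ, (Real.sqrt N : ℂ) * a * ((Real.sqrt N : ℂ) * b)
            = ((Real.sqrt N : ℂ) * (Real.sqrt N : ℂ)) * (a * b) from fun a b => by ring, this]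
      simp only [h3]
      rw [← Finset.mul_sum, parseval u hortho c]
    have h4 : ∑ n, ‖locOp u lam g i n‖ ^ 2
        = (∑ n, locOp u lam g i n * (starRingEnd ℂ) (locOp u lam g i n)).re := by
      rw [Complex.re_sum]
      exact Finset.sum_congr rfl fun n _ => h1 _
    rw [h4, h2]
    simp only [Complex.mul_conj]
    rw [← Complex.ofReal_sum]
    rw [← Complex.ofReal_natCast, ← Complex.ofReal_mul, Complex.ofReal_re]
    congr 1
    refine Finset.sum_congr rfl fun l _ => ?_
    rw [← Complex.sq_norm, hc]
    simp [map_mul, mul_pow]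
  rw [lpnorm, ← hsum, Real.sqrt_eq_rpow]
  have h5 : ∀ x : ℝ, x ^ (2:ℝ) = x ^ 2 := fun x => by
    rw [show (2:ℝ) = ((2:ℕ):ℝ) by norm_num, Real.rpow_natCast]
  simp only [h5]


/-- Norm bounds for the graph localization operator. -/
theorem stmt13 {N : ℕ} (hN : 0 < N) (u : Fin N → Fin N → ℂ)
    (hortho : ∀ l m, ip (u l) (u m) = if l = m then 1 else 0)
    (lam : Fin N → ℝ)
    (hlam0 : lam ⟨0, hN⟩ = 0)
    (hu0 : ∀ n, u ⟨0, hN⟩ n = ((1 / Real.sqrt N : ℝ) : ℂ))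
    (g : ℝ → ℂ) (i : Fin N) :
    ‖g 0‖ ≤ lpnorm 2 (locOp u lam g i) ∧
      lpnorm 2 (locOp u lam g i) ≤
        Real.sqrt N * (⨆ l, ‖u l i‖) *
          Real.sqrt (∑ l, ‖g (lam l)‖ ^ 2) ∧
      Real.sqrt N * (⨆ l, ‖u l i‖) *
          Real.sqrt (∑ l, ‖g (lam l)‖ ^ 2) ≤
        Real.sqrt N * (⨆ q : Fin N × Fin N, ‖u q.1 q.2‖) *
          Real.sqrt (∑ l, ‖g (lam l)‖ ^ 2) := by
  haveI : Nonempty (Fin N) := ⟨⟨0, hN⟩⟩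
  have key := lpnorm_locOp u hortho lam g i
  set S : ℝ := ∑ l, ‖g (lam l)‖ ^ 2 with hS
  set ν : ℝ := ⨆ l, ‖u l i‖ with hν
  have hbdd : BddAbove (Set.range fun l : Fin N => ‖u l i‖) :=
    (Set.finite_range _).bddAbove
  have hbdd2 : BddAbove (Set.range fun q : Fin N × Fin N => ‖u q.1 q.2‖) :=
    (Set.finite_range _).bddAbove
  have hν0 : 0 ≤ ν := le_trans (norm_nonneg (u ⟨0, hN⟩ i)) (le_ciSup hbdd ⟨0, hN⟩)
  have hNpos : (0:ℝ) < N := by exact_mod_cast hN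
  refine ⟨?_, ?_, ?_⟩
  · -- lower bound
    rw [key]
    have habs : ‖u ⟨0, hN⟩ i‖ ^ 2 = 1 / N := by
      rw [hu0 i, Complex.norm_real, Real.norm_eq_abs, abs_of_nonneg (by positivity), div_pow, one_pow,
        Real.sq_sqrt (Nat.cast_nonneg N)]
    have hterm : ‖g 0‖ ^ 2
        = (N:ℝ) * (‖g (lam ⟨0, hN⟩)‖ ^ 2 * ‖u ⟨0, hN⟩ i‖ ^ 2) := by
      rw [habs, hlam0]; field_simp
    calc ‖g 0‖ = Real.sqrt (‖g 0‖ ^ 2) :=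
          (Real.sqrt_sq (norm_nonneg _)).symm
      _ ≤ _ := by
          apply Real.sqrt_le_sqrt
          rw [hterm, Finset.mul_sum]
          exact Finset.single_le_sum
            (f := fun l => (N:ℝ) * (‖g (lam l)‖ ^ 2 * ‖u l i‖ ^ 2))
            (fun l _ => by positivity) (Finset.mem_univ (⟨0, hN⟩ : Fin N))
  · -- upper bound
    rw [key]
    have hrhs : Real.sqrt N * ν * Real.sqrt S = Real.sqrt ((N:ℝ) * (ν ^ 2 * S)) := by
      rw [Real.sqrt_mul (Nat.cast_nonneg N), Real.sqrt_mul (by positivity),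
        Real.sqrt_sq hν0, mul_assoc]
    rw [hrhs]
    apply Real.sqrt_le_sqrt
    apply mul_le_mul_of_nonneg_left _ (Nat.cast_nonneg N)
    rw [hS, Finset.mul_sum]
    refine Finset.sum_le_sum fun l _ => ?_
    have h1 : ‖u l i‖ ^ 2 ≤ ν ^ 2 :=
      pow_le_pow_left₀ (norm_nonneg _) (le_ciSup hbdd l) 2
    calc ‖g (lam l)‖ ^ 2 * ‖u l i‖ ^ 2
        ≤ ‖g (lam l)‖ ^ 2 * ν ^ 2 :=
          mul_le_mul_of_nonneg_left h1 (by positivity)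
      _ = ν ^ 2 * ‖g (lam l)‖ ^ 2 := mul_comm _ _
  · -- nu ≤ mu
    have hνμ : ν ≤ ⨆ q : Fin N × Fin N, ‖u q.1 q.2‖ :=
      ciSup_le fun l => le_ciSup hbdd2 (l, i)
    exact mul_le_mul_of_nonneg_right
      (mul_le_mul_of_nonneg_left hνμ (Real.sqrt_nonneg _)) (Real.sqrt_nonneg _)
end

section
/- For two kernels ĝ, ĥ defined on the graph Laplacian spectrum and any vertices i, j, the localized atoms satisfy ⟨T_i g, T_j h⟩ = √N · T_i(g·h)(j), where g·h denotes the signal whose graph Fourier transform is the pointwise product ĝ·ĥ, and T_i g(n) = √N Σ_l ĝ(λ_l) conj(u_l(i)) u_l(n). -/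
open Finset

/-- Graph localization operator for a real-valued kernel. -/
noncomputable def locOpR {N : ℕ} (u : Fin N → Fin N → ℂ) (lam : Fin N → ℝ)
    (g : ℝ → ℝ) (i : Fin N) : Fin N → ℂ :=
  fun n => (Real.sqrt N : ℂ) * ∑ l, (g (lam l) : ℂ) * (starRingEnd ℂ) (u l i) * u l n

/-- Inner products of localized kernels: ⟨T_i g, T_j h⟩ = √N · T_i(g·h)(j). -/
theorem stmt15 {N : ℕ} (u : Fin N → Fin N → ℂ)
    (hortho : ∀ l m, ip (u l) (u m) = if l = m then 1 else 0)
    (lam : Fin N → ℝ) (g h : ℝ → ℝ) (i j : Fin N) :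
    ip (locOpR u lam g i) (locOpR u lam h j) =
      (Real.sqrt N : ℂ) * locOpR u lam (fun x => g x * h x) i j := by
  simp only [ip, locOpR] at hortho ⊢
  have key : ∀ l m : Fin N, ∑ n, u l n * (starRingEnd ℂ) (u m n)
      = if l = m then 1 else 0 := hortho
  calc ∑ n, ((Real.sqrt N : ℂ) * ∑ l, (g (lam l) : ℂ) * (starRingEnd ℂ) (u l i) * u l n) *
        (starRingEnd ℂ) ((Real.sqrt N : ℂ) * ∑ m, (h (lam m) : ℂ) * (starRingEnd ℂ) (u m j) * u m n)
      = (Real.sqrt N : ℂ) * (Real.sqrt N : ℂ) *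
        ∑ l, ∑ m, ((g (lam l) : ℂ) * (starRingEnd ℂ) (u l i)) *
          ((h (lam m) : ℂ) * u m j) * ∑ n, u l n * (starRingEnd ℂ) (u m n) := by
        simp only [map_mul, map_sum, mul_sum, sum_mul]
        rw [Finset.sum_comm]
        refine (Finset.sum_congr rfl fun y _ => Finset.sum_comm).trans ?_
        rw [Finset.sum_comm]
        refine Finset.sum_congr rfl fun l _ => ?_
        refine Finset.sum_congr rfl fun m _ => ?_
        refine Finset.sum_congr rfl fun n _ => ?_
        simp only [map_mul, RingHomInvPair.comp_apply_eq, Complex.conj_ofReal,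
          Complex.conj_conj]
        ring
    _ = (Real.sqrt N : ℂ) * (Real.sqrt N : ℂ) *
        ∑ l, ((g (lam l) : ℂ) * (starRingEnd ℂ) (u l i)) * ((h (lam l) : ℂ) * u l j) := by
        congr 1
        refine Finset.sum_congr rfl fun l _ => ?_
        rw [Finset.sum_eq_single l]
        · rw [key l l]; simp
        · intro m _ hm; rw [key l m, if_neg (Ne.symm hm)]; simp
        · simp
    _ = (Real.sqrt N : ℂ) * ((Real.sqrt N : ℂ) *
        ∑ l, ((g (lam l) * h (lam l) : ℝ) : ℂ) * (starRingEnd ℂ) (u l i) * u l j) := by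
        rw [mul_assoc]
        congr 1
        rw [mul_sum, mul_sum]
        refine Finset.sum_congr rfl fun l _ => ?_
        push_cast
        ring
end
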